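/- Let ν be the pushforward of a probability measure with Lebesgue density f* on ℝ^p under the map h(y*) = (h₁(y₁*), h₂(y₂*)), where h₁ is a diffeomorphism onto its image and h₂ maps ℝ^{p₂} to a countable set Q via a measurable partition (h₂(y₂*) = y₂ iff y₂* ∈ A_{y₂}). Then ν is absolutely continuous with respect to the product μ of Lebesgue measure on the image of h₁ and counting measure on Q, and its Radon–Nikodym density is f(y₁, y₂) = ∫_{A_{y₂}} f*(h₁⁻¹(y₁), y₂*) |det J_{h₁⁻¹}(y₁)| dy₂*. -/

import Mathlib

/-!
Slicing `S ⊆ Y × Q` along `Q`, the preimage `h⁻¹ S` is the disjoint union over `q ∈ Q` of the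
rectangles `h₁⁻¹ S_q × A q`. Integrating `f*` over such a rectangle with Tonelli gives
`∫_{h₁⁻¹ S_q} ∫_{A q} f*`, and the change of variables `y₁* = h₁⁻¹ y₁` turns the outer integral
into an integral over `S_q ⊆ Y` against `|det J_{h₁⁻¹}|`. Summing over `q` is integrating
against counting measure on `Q`.
-/

open MeasureTheory Set

theorem preimage_prodMap_eq_iUnion {α β γ Q : Type*} (φ : α → γ) (g : β → Q) (S : Set (γ × Q)) :
    Prod.map φ g ⁻¹' S = ⋃ q, (φ ⁻¹' ((·, q) ⁻¹' S)) ×ˢ (g ⁻¹' {q}) := by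
  ext ⟨a, b⟩
  simp

section

variable {α β γ Q : Type*} [MeasurableSpace α] [MeasurableSpace β] [MeasurableSpace γ]
  [MeasurableSpace Q] [Countable Q]

theorem lintegral_prod_count [MeasurableSingletonClass Q] (μ : Measure α) [SFinite μ]
    (F : α × Q → ENNReal) :
    ∫⁻ z, F z ∂μ.prod Measure.count = ∑' q, ∫⁻ a, F (a, q) ∂μ := by
  rw [Measure.count, Measure.prod_sum_right, lintegral_sum_measure]
  congr 1 with q
  rw [Measure.prod_dirac]
  exact (MeasurableEmbedding.id.prodMk_right q).lintegral_map F

theorem map_prodMap_apply_eq_tsum (ρ : Measure (α × β)) {φ : α → γ} {g : β → Q}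
    (hφ : Measurable φ) (hg : ∀ q, MeasurableSet (g ⁻¹' {q})) {S : Set (γ × Q)}
    (hS : MeasurableSet S) :
    ρ.map (Prod.map φ g) S = ∑' q, ρ ((φ ⁻¹' ((·, q) ⁻¹' S)) ×ˢ (g ⁻¹' {q})) := by
  rw [Measure.map_apply (hφ.prodMap (measurable_to_countable' hg)) hS,
    preimage_prodMap_eq_iUnion]
  refine measure_iUnion (fun q q' hqq' => ?_) fun q =>
    (hφ (measurable_prodMk_right hS)).prod (hg q)
  exact disjoint_prod.mpr (Or.inr ((disjoint_singleton.mpr hqq').preimage g))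

variable {E : Type*} [NormedAddCommGroup E] [NormedSpace ℝ E] [FiniteDimensional ℝ E]
  [MeasurableSpace E] [BorelSpace E] (μ : Measure E) [μ.IsAddHaarMeasure]

theorem lintegral_eq_setLIntegral_abs_det_fderiv_mul_of_image_eq_univ {s : Set E}
    (hs : MeasurableSet s) {ψ : E → E} {ψ' : E → E →L[ℝ] E}
    (hψ' : ∀ y ∈ s, HasFDerivWithinAt ψ (ψ' y) s y) (hψ : InjOn ψ s) (himg : ψ '' s = univ)
    (F : E → ENNReal) :
    ∫⁻ x, F x ∂μ = ∫⁻ y in s, ENNReal.ofReal |(ψ' y).det| * F (ψ y) ∂μ := by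
  rw [← lintegral_image_eq_lintegral_abs_det_fderiv_mul μ hs hψ' hψ, himg,
    Measure.restrict_univ]

theorem map_prodMap_withDensity_eq_withDensity [MeasurableSingletonClass Q]
    (ν : Measure β) [SFinite ν] {f : E × β → ENNReal} (hf : Measurable f)
    {s : Set E} (hs : MeasurableSet s) {φ ψ : E → E} (hφ : Measurable φ)
    (hφψ : ∀ y ∈ s, φ (ψ y) = y) {ψ' : E → E →L[ℝ] E}
    (hψ' : ∀ y ∈ s, HasFDerivWithinAt ψ (ψ' y) s y) (hψ : InjOn ψ s) (himg : ψ '' s = univ)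
    {g : β → Q} (hg : ∀ q, MeasurableSet (g ⁻¹' {q})) :
    ((μ.prod ν).withDensity f).map (Prod.map φ g) =
      ((μ.restrict s).prod Measure.count).withDensity fun yq =>
        (∫⁻ b in g ⁻¹' {yq.2}, f (ψ yq.1, b) ∂ν) * ENNReal.ofReal |(ψ' yq.1).det| := by
  ext S hS
  rw [map_prodMap_apply_eq_tsum _ hφ hg hS, withDensity_apply _ hS, ← lintegral_indicator hS,
    lintegral_prod_count]
  congr 1 with q
  have hslice : MeasurableSet (φ ⁻¹' ((·, q) ⁻¹' S)) := hφ (measurable_prodMk_right hS)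
  rw [withDensity_apply _ (hslice.prod (hg q)), ← Measure.prod_restrict,
    lintegral_prod _ hf.aemeasurable, ← lintegral_indicator hslice,
    lintegral_eq_setLIntegral_abs_det_fderiv_mul_of_image_eq_univ μ hs hψ' hψ himg]
  refine setLIntegral_congr_fun hs fun y hy => ?_
  by_cases hyS : (y, q) ∈ S <;> simp [indicator, hφψ y hy, hyS, mul_comm]

end

theorem pushforward_density_formula_general
    {p₁ p₂ : ℕ} {Q : Type*} [Countable Q] [MeasurableSpace Q] [MeasurableSingletonClass Q]
    (fstar : ((Fin p₁ → ℝ) × (Fin p₂ → ℝ)) → ENNReal)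
    (hfstar_meas : Measurable fstar)
    (Yset : Set (Fin p₁ → ℝ)) (hYmeas : MeasurableSet Yset)
    (h₁ : (Fin p₁ → ℝ) → (Fin p₁ → ℝ)) (h₁inv : (Fin p₁ → ℝ) → (Fin p₁ → ℝ))
    (hright : ∀ y ∈ Yset, h₁ (h₁inv y) = y)
    (J : (Fin p₁ → ℝ) → ((Fin p₁ → ℝ) →L[ℝ] (Fin p₁ → ℝ)))
    (hderiv : ∀ y ∈ Yset, HasFDerivWithinAt h₁inv (J y) Yset y)
    (hinj : Set.InjOn h₁inv Yset)
    (himg : h₁inv '' Yset = Set.univ)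
    (A : Q → Set (Fin p₂ → ℝ)) (hAmeas : ∀ q, MeasurableSet (A q))
    (h₂ : (Fin p₂ → ℝ) → Q) (hh₂ : ∀ z q, h₂ z = q ↔ z ∈ A q)
    (h : ((Fin p₁ → ℝ) × (Fin p₂ → ℝ)) → ((Fin p₁ → ℝ) × Q))
    (hh : h = fun y => (h₁ y.1, h₂ y.2)) (hhmeas : Measurable h) :
    (Measure.map h (volume.withDensity fstar)) ≪
        ((volume.restrict Yset).prod (Measure.count : Measure Q)) ∧
    (Measure.map h (volume.withDensity fstar)) =
      ((volume.restrict Yset).prod (Measure.count : Measure Q)).withDensity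
        (fun yq : (Fin p₁ → ℝ) × Q =>
          (∫⁻ z in A yq.2, fstar (h₁inv yq.1, z) ∂(volume : Measure (Fin p₂ → ℝ))) *
            ENNReal.ofReal |(J yq.1 : (Fin p₁ → ℝ) →L[ℝ] (Fin p₁ → ℝ)).det|) := by
  obtain rfl : A = fun q => h₂ ⁻¹' {q} := funext fun q => ext fun z => (hh₂ z q).symm
  subst hh
  have hh₁ : Measurable h₁ := (measurable_fst.comp hhmeas).comp (measurable_prodMk_right (y := 0))
  have key := map_prodMap_withDensity_eq_withDensity volume volume hfstar_meas hYmeas hh₁ hright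
    hderiv hinj himg hAmeas
  rw [← Measure.volume_eq_prod] at key
  exact ⟨key ▸ withDensity_absolutelyContinuous _ _, key⟩

/-- the pushforward `ν` of the probability measure with Lebesgue density
`f*` under the map `h(y₁*, y₂*) = (h₁ y₁*, h₂ y₂*)` (with `h₂` given by a countable
measurable partition `{A q}`) is absolutely continuous with respect to the product `μ` of
Lebesgue measure on `Y` and counting measure on `Q`, with Radon–Nikodym density
`f(y₁, q) = ∫_{A q} f*(h₁⁻¹ y₁, z) |det J_{h₁⁻¹}(y₁)| dz`. -/
theorem pushforward_density_formula
    {p₁ p₂ : ℕ} {Q : Type*} [Countable Q] [MeasurableSpace Q] [MeasurableSingletonClass Q]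
    (fstar : ((Fin p₁ → ℝ) × (Fin p₂ → ℝ)) → ENNReal)
    (hfstar_meas : Measurable fstar)
    (hfstar_prob : ∫⁻ y, fstar y ∂(volume : Measure ((Fin p₁ → ℝ) × (Fin p₂ → ℝ))) = 1)
    (Yset : Set (Fin p₁ → ℝ)) (hYmeas : MeasurableSet Yset)
    (h₁ : (Fin p₁ → ℝ) → (Fin p₁ → ℝ)) (h₁inv : (Fin p₁ → ℝ) → (Fin p₁ → ℝ))
    (hrange : Set.range h₁ = Yset)
    (hleft : ∀ x, h₁inv (h₁ x) = x) (hright : ∀ y ∈ Yset, h₁ (h₁inv y) = y)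
    (J : (Fin p₁ → ℝ) → ((Fin p₁ → ℝ) →L[ℝ] (Fin p₁ → ℝ)))
    (hderiv : ∀ y ∈ Yset, HasFDerivWithinAt h₁inv (J y) Yset y)
    (hinj : Set.InjOn h₁inv Yset)
    (himg : h₁inv '' Yset = Set.univ)
    (A : Q → Set (Fin p₂ → ℝ)) (hAmeas : ∀ q, MeasurableSet (A q))
    (hAdisj : Pairwise (Function.onFun Disjoint A)) (hAcover : (⋃ q, A q) = Set.univ)
    (h₂ : (Fin p₂ → ℝ) → Q) (hh₂ : ∀ z q, h₂ z = q ↔ z ∈ A q)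
    (h : ((Fin p₁ → ℝ) × (Fin p₂ → ℝ)) → ((Fin p₁ → ℝ) × Q))
    (hh : h = fun y => (h₁ y.1, h₂ y.2)) (hhmeas : Measurable h) :
    (Measure.map h (volume.withDensity fstar)) ≪
        ((volume.restrict Yset).prod (Measure.count : Measure Q)) ∧
    (Measure.map h (volume.withDensity fstar)) =
      ((volume.restrict Yset).prod (Measure.count : Measure Q)).withDensity
        (fun yq : (Fin p₁ → ℝ) × Q =>
          (∫⁻ z in A yq.2, fstar (h₁inv yq.1, z) ∂(volume : Measure (Fin p₂ → ℝ))) *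
            ENNReal.ofReal |(J yq.1 : (Fin p₁ → ℝ) →L[ℝ] (Fin p₁ → ℝ)).det|) :=
  pushforward_density_formula_general fstar hfstar_meas Yset hYmeas h₁ h₁inv hright J hderiv hinj
    himg A hAmeas h₂ hh₂ h hh hhmeas
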